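/- Let Γ be a smooth closed curve in R^N and y0 ∈ Γ. There exists r > 0, depending only on Γ and N, such that for every x = (y,z) ∈ Q_r the components of the metric induced by F_{y0} satisfy: g_{11}(x) = 1 + 2Σ_{i=2}^N z_i κ_i(0) + 2y Σ_{i=2}^N z_i κ_i'(0) + Σ_{i,j=2}^N z_i z_j κ_i(0)κ_j(0) + Σ_{i,j=2}^N z_i z_j β_{ij}(0) + O(|x|³), g_{1i}(x) = Σ_{j=2}^N z_j τ_j^i(0) + y Σ_{j=2}^N z_j (τ_j^i)'(0) + O(|x|³), and g_{ij}(x) = δ_{ij}, where β_{ij}(y) := Σ_{l=2}^N τ_i^l(y) τ_j^l(y). -/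

import Mathlib

open MeasureTheory Real Filter Set Topology
open scoped RealInnerProductSpace ENNReal NNReal

noncomputable section

/-- Points of `ℝ^N` written as `x = (y, z) ∈ ℝ × ℝ^{N-1}`. -/
abbrev Pt (N : ℕ) := ℝ × EuclideanSpace ℝ (Fin (N - 1))

/-- The Euclidean norm `|x|` of a point `x = (y,z)`. -/
noncomputable def pnorm {N : ℕ} (x : Pt N) : ℝ := Real.sqrt (x.1 ^ 2 + ‖x.2‖ ^ 2)

/-- Partial derivative in the `y`-direction. -/
noncomputable def dy {N : ℕ} (u : Pt N → ℝ) (x : Pt N) : ℝ := fderiv ℝ u x (1, 0)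

/-- Partial derivative in the `z_i`-direction. -/
noncomputable def dz {N : ℕ} (u : Pt N → ℝ) (i : Fin (N - 1)) (x : Pt N) : ℝ :=
  fderiv ℝ u x (0, EuclideanSpace.single i 1)

/-- `|∇u|²`, the squared Euclidean norm of the gradient. -/
noncomputable def gradsq {N : ℕ} (u : Pt N → ℝ) (x : Pt N) : ℝ :=
  dy u x ^ 2 + ∑ i, dz u i x ^ 2

/-- The Laplacian `Δu` on `ℝ × ℝ^{N-1}`. -/
noncomputable def lap {N : ℕ} (u : Pt N → ℝ) (x : Pt N) : ℝ :=
  fderiv ℝ (dy u) x (1, 0) + ∑ i, fderiv ℝ (dz u i) x (0, EuclideanSpace.single i 1)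

/-- The critical Hardy-Sobolev exponent `2*_s = 2(N-s)/(N-2)`. -/
noncomputable def tstar (N : ℕ) (s : ℝ) : ℝ := 2 * ((N : ℝ) - s) / ((N : ℝ) - 2)

/-- Membership in `D^{1,2}(ℝ^N)`: `u ∈ L^{2N/(N-2)}` with `|∇u|² ∈ L¹`. -/
def MemD12 (N : ℕ) (u : Pt N → ℝ) : Prop :=
  MemLp u (ENNReal.ofReal (2 * (N : ℝ) / ((N : ℝ) - 2))) volume ∧
  Integrable (fun x => gradsq u x) volume

/-- `w` solves `-Δw = λ|z|^{-s₁}w^{2*_{s₁}-1} + |z|^{-s₂}w^{2*_{s₂}-1}` in `ℝ^N`. -/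
def SolvesEq (N : ℕ) (s1 s2 l : ℝ) (w : Pt N → ℝ) : Prop :=
  ∀ x : Pt N, x.2 ≠ 0 →
    -lap w x = l * ‖x.2‖ ^ (-s1) * w x ^ (tstar N s1 - 1)
      + ‖x.2‖ ^ (-s2) * w x ^ (tstar N s2 - 1)

/-- The functional `Φ` on `D^{1,2}(ℝ^N)`. -/
noncomputable def Phi (N : ℕ) (s1 s2 l : ℝ) (u : Pt N → ℝ) : ℝ :=
  (1 / 2) * (∫ x : Pt N, gradsq u x)
    - (l / tstar N s1) * ∫ x : Pt N, ‖x.2‖ ^ (-s1) * |u x| ^ tstar N s1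
    - (1 / tstar N s2) * ∫ x : Pt N, ‖x.2‖ ^ (-s2) * |u x| ^ tstar N s2

/-- `β* = inf_{u ∈ D^{1,2}, u ≥ 0, u ≠ 0} max_{t ≥ 0} Φ(tu)`. -/
noncomputable def betastar (N : ℕ) (s1 s2 l : ℝ) : ℝ :=
  sInf {c | ∃ u : Pt N → ℝ, MemD12 N u ∧ (∀ x, 0 ≤ u x) ∧ u ≠ 0 ∧
    c = ⨆ t : Set.Ici (0 : ℝ), Phi N s1 s2 l ((t : ℝ) • u)}

/-- The distance function `ρ_Γ` to the set `Γ`. -/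
noncomputable def rhoDist {N : ℕ} (Γ : Set (EuclideanSpace ℝ (Fin N)))
    (x : EuclideanSpace ℝ (Fin N)) : ℝ := Metric.infDist x Γ

/-- Membership in `H¹₀(Ω)`: vanishing outside `Ω`, with `u` and `|∇u|` in `L²(Ω)`. -/
def MemH10 {N : ℕ} (Ω : Set (EuclideanSpace ℝ (Fin N)))
    (u : EuclideanSpace ℝ (Fin N) → ℝ) : Prop :=
  (∀ x, x ∉ Ω → u x = 0) ∧ MemLp u 2 (volume.restrict Ω) ∧
    MemLp (fun x => ‖gradient u x‖) 2 (volume.restrict Ω)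

/-- The functional `Ψ` on `H¹₀(Ω)`. -/
noncomputable def Psi {N : ℕ} (s1 s2 l : ℝ) (Ω Γ : Set (EuclideanSpace ℝ (Fin N)))
    (h u : EuclideanSpace ℝ (Fin N) → ℝ) : ℝ :=
  (1 / 2) * (∫ x in Ω, ‖gradient u x‖ ^ 2)
    + (1 / 2) * (∫ x in Ω, h x * u x ^ 2)
    - (l / tstar N s1) * ∫ x in Ω, rhoDist Γ x ^ (-s1) * |u x| ^ tstar N s1
    - (1 / tstar N s2) * ∫ x in Ω, rhoDist Γ x ^ (-s2) * |u x| ^ tstar N s2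

/-- `c* = inf_{u ∈ H¹₀(Ω), u ≥ 0, u ≠ 0} max_{t ≥ 0} Ψ(tu)`. -/
noncomputable def cstar {N : ℕ} (s1 s2 l : ℝ) (Ω Γ : Set (EuclideanSpace ℝ (Fin N)))
    (h : EuclideanSpace ℝ (Fin N) → ℝ) : ℝ :=
  sInf {c | ∃ u, MemH10 Ω u ∧ (∀ x, 0 ≤ u x) ∧ u ≠ 0 ∧
    c = ⨆ t : Set.Ici (0 : ℝ), Psi s1 s2 l Ω Γ h ((t : ℝ) • u)}

/-- Coercivity of the operator `-Δ + h` on `H¹₀(Ω)`. -/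
def CoerciveOp {N : ℕ} (Ω : Set (EuclideanSpace ℝ (Fin N)))
    (h : EuclideanSpace ℝ (Fin N) → ℝ) : Prop :=
  ∃ c > 0, ∀ u, MemH10 Ω u →
    c * ((∫ x in Ω, u x ^ 2) + ∫ x in Ω, ‖gradient u x‖ ^ 2) ≤
      (∫ x in Ω, ‖gradient u x‖ ^ 2) + ∫ x in Ω, h x * u x ^ 2

/-- `Γ` is a smooth closed curve: the range of a smooth, periodic, unit-speed,
injective-on-a-period map. -/
def IsSmoothClosedCurve {N : ℕ} (Γ : Set (EuclideanSpace ℝ (Fin N))) : Prop :=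
  ∃ (L : ℝ) (γ : ℝ → EuclideanSpace ℝ (Fin N)), 0 < L ∧ ContDiff ℝ (⊤ : ℕ∞) γ ∧
    Function.Periodic γ L ∧ (∀ t, ‖deriv γ t‖ = 1) ∧
    Set.InjOn γ (Set.Ico 0 L) ∧ Γ = Set.range γ

/-- `κv` is the curvature vector of the curve `Γ`: at each point `p ∈ Γ` it is
the second derivative (up to the standard sign convention) of a unit-speed
parametrization through `p`. -/
def IsCurvatureVec {N : ℕ} (Γ : Set (EuclideanSpace ℝ (Fin N)))
    (κv : EuclideanSpace ℝ (Fin N) → EuclideanSpace ℝ (Fin N)) : Prop :=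
  ∀ p ∈ Γ, ∃ γ : ℝ → EuclideanSpace ℝ (Fin N), ContDiff ℝ (⊤ : ℕ∞) γ ∧ γ 0 = p ∧
    (∀ t, γ t ∈ Γ) ∧ (∀ t, ‖deriv γ t‖ = 1) ∧ κv p = -deriv (deriv γ) 0

/-- The Laplacian on `EuclideanSpace ℝ (Fin N)`. -/
noncomputable def lapE {N : ℕ} (u : EuclideanSpace ℝ (Fin N) → ℝ)
    (x : EuclideanSpace ℝ (Fin N)) : ℝ :=
  ∑ i, fderiv ℝ (fun v => fderiv ℝ u v (EuclideanSpace.single i 1)) x (EuclideanSpace.single i 1)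

/-- `u` solves `-Δu + hu = λρ_Γ^{-s₁}u^{2*_{s₁}-1} + ρ_Γ^{-s₂}u^{2*_{s₂}-1}` in `Ω`. -/
def SolvesEqOmega {N : ℕ} (s1 s2 l : ℝ) (Ω Γ : Set (EuclideanSpace ℝ (Fin N)))
    (h u : EuclideanSpace ℝ (Fin N) → ℝ) : Prop :=
  ∀ x ∈ Ω, x ∉ Γ →
    -lapE u x + h x * u x =
      l * rhoDist Γ x ^ (-s1) * u x ^ (tstar N s1 - 1)
        + rhoDist Γ x ^ (-s2) * u x ^ (tstar N s2 - 1)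

/-- The derivative `Ψ'(u)` applied to a test function `φ`. -/
noncomputable def PsiDeriv {N : ℕ} (s1 s2 l : ℝ) (Ω Γ : Set (EuclideanSpace ℝ (Fin N)))
    (h u φ : EuclideanSpace ℝ (Fin N) → ℝ) : ℝ :=
  (∫ x in Ω, ⟪gradient u x, gradient φ x⟫) + (∫ x in Ω, h x * u x * φ x)
    - l * ∫ x in Ω, rhoDist Γ x ^ (-s1) * |u x| ^ (tstar N s1 - 2) * u x * φ x
    - ∫ x in Ω, rhoDist Γ x ^ (-s2) * |u x| ^ (tstar N s2 - 2) * u x * φ x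

/-- The `H¹` norm on `Ω`. -/
noncomputable def h1norm {N : ℕ} (Ω : Set (EuclideanSpace ℝ (Fin N)))
    (u : EuclideanSpace ℝ (Fin N) → ℝ) : ℝ :=
  Real.sqrt ((∫ x in Ω, u x ^ 2) + ∫ x in Ω, ‖gradient u x‖ ^ 2)

/-- A Palais-Smale sequence for `Ψ` at level `α`: `Ψ(uₙ) → α` and `Ψ'(uₙ) → 0`
in `H^{-1}(Ω)`. -/
def PSseq {N : ℕ} (s1 s2 l : ℝ) (Ω Γ : Set (EuclideanSpace ℝ (Fin N)))
    (h : EuclideanSpace ℝ (Fin N) → ℝ) (u : ℕ → EuclideanSpace ℝ (Fin N) → ℝ)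
    (α : ℝ) : Prop :=
  (∀ n, MemH10 Ω (u n)) ∧
  Tendsto (fun n => Psi s1 s2 l Ω Γ h (u n)) atTop (𝓝 α) ∧
  ∀ δ > 0, ∀ᶠ n in atTop, ∀ φ, MemH10 Ω φ → h1norm Ω φ ≤ 1 →
    |PsiDeriv s1 s2 l Ω Γ h (u n) φ| ≤ δ

/-- The Fermi parametrization `F_{y₀}(y,z) = γ(y) + Σᵢ zᵢ Eᵢ(y)`. -/
noncomputable def Fermi {N : ℕ} (γ : ℝ → EuclideanSpace ℝ (Fin N))
    (E : Fin (N - 1) → ℝ → EuclideanSpace ℝ (Fin N)) (x : Pt N) :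
    EuclideanSpace ℝ (Fin N) :=
  γ x.1 + ∑ i, x.2 i • E i x.1

/-- The cylinder `Q_r = (-r,r) × B_{ℝ^{N-1}}(0,r)`. -/
def Qset (N : ℕ) (r : ℝ) : Set (Pt N) :=
  Set.Ioo (-r) r ×ˢ Metric.ball (0 : EuclideanSpace ℝ (Fin (N - 1))) r

/-- The coordinate directions of `ℝ × ℝ^{N-1}`, indexed by `Fin N`. -/
noncomputable def dir (N : ℕ) (a : Fin N) : Pt N :=
  if h : (a : ℕ) = 0 then ((1 : ℝ), 0)
  else (0, EuclideanSpace.single ⟨(a : ℕ) - 1, by have := a.isLt; omega⟩ (1 : ℝ))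

/-- The metric `g` induced by the parametrization `F`, as a matrix. -/
noncomputable def gmat {N : ℕ} (F : Pt N → EuclideanSpace ℝ (Fin N)) (x : Pt N) :
    Matrix (Fin N) (Fin N) ℝ :=
  Matrix.of fun a b => ⟪fderiv ℝ F x (dir N a), fderiv ℝ F x (dir N b)⟫

/-- The embedding of `z`-indices `{2,…,N}` into `Fin N`. -/
def idx {N : ℕ} (i : Fin (N - 1)) : Fin N := ⟨(i : ℕ) + 1, by have := i.isLt; omega⟩

/-- The metric component `g(v,w) = ⟨∂_v F, ∂_w F⟩` at `x`. -/
noncomputable def gcomp {N : ℕ} (F : Pt N → EuclideanSpace ℝ (Fin N)) (v w x : Pt N) : ℝ :=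
  ⟪fderiv ℝ F x v, fderiv ℝ F x w⟫

/-- `|∇v|²_g = g^{ab} ∂_a v ∂_b v`, the squared gradient with respect to `g`. -/
noncomputable def gradg {N : ℕ} (F : Pt N → EuclideanSpace ℝ (Fin N))
    (v : Pt N → ℝ) (x : Pt N) : ℝ :=
  ∑ a, ∑ b, (gmat F x)⁻¹ a b * fderiv ℝ v x (dir N a) * fderiv ℝ v x (dir N b)



open scoped ContDiff in
/-- Taylor bounds of order 1 and 2 at 0 for a smooth real function, on `[-1,1]`. -/
lemma taylor_aux' (f : ℝ → ℝ) (hf : ContDiff ℝ ((⊤ : ENat) : WithTop ENat) f) :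
    ∃ C > 0, ∀ y : ℝ, |y| ≤ 1 →
      |f y - f 0 - y * deriv f 0| ≤ C * y ^ 2 ∧ |f y - f 0| ≤ C * |y| := by
  have hdf : ContDiff ℝ ∞ (deriv f) := (contDiff_infty_iff_deriv.mp hf).2
  have hdf2 : ContDiff ℝ ∞ (deriv (deriv f)) := (contDiff_infty_iff_deriv.mp hdf).2
  obtain ⟨M1, hM1⟩ := (isCompact_Icc (a := (-1:ℝ)) (b := 1)).exists_bound_of_continuousOn
    (hdf.continuous.continuousOn)
  obtain ⟨M2, hM2⟩ := (isCompact_Icc (a := (-1:ℝ)) (b := 1)).exists_bound_of_continuousOn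
    (hdf2.continuous.continuousOn)
  have h0 : (0:ℝ) ∈ Icc (-1:ℝ) 1 := by norm_num
  have hM1nn : 0 ≤ M1 := le_trans (norm_nonneg _) (hM1 0 h0)
  have hM2nn : 0 ≤ M2 := le_trans (norm_nonneg _) (hM2 0 h0)
  set C := max M1 M2 + 1 with hC
  have hCpos : 0 < C := by have := le_max_left M1 M2; positivity
  have lipdf : ∀ s ∈ Icc (-1:ℝ) 1, |deriv f s - deriv f 0| ≤ C * |s| := by
    intro s hs
    have := Convex.norm_image_sub_le_of_norm_hasDerivWithin_le
      (f := deriv f) (f' := deriv (deriv f)) (s := Icc (-1:ℝ) 1) (C := C)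
      (fun u hu => ((hdf.differentiable (by simp)).differentiableAt.hasDerivAt).hasDerivWithinAt)
      (fun u hu => le_trans (hM2 u hu) (by simp [hC]; linarith [le_max_right M1 M2]))
      (convex_Icc _ _) h0 hs
    simpa using this
  refine ⟨C, hCpos, fun y hy => ?_⟩
  have hyIcc : y ∈ Icc (-1:ℝ) 1 := abs_le.mp hy |> fun h => ⟨h.1, h.2⟩
  constructor
  · have key : ∀ u ∈ uIcc (0:ℝ) y, HasDerivWithinAt (fun v => f v - f 0 - v * deriv f 0)
        (deriv f u - deriv f 0) (uIcc (0:ℝ) y) u := by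
      intro u hu
      have h1 : HasDerivAt f (deriv f u) u :=
        (hf.differentiable (by simp)).differentiableAt.hasDerivAt
      have h2 : HasDerivAt (fun v : ℝ => v * deriv f 0) (deriv f 0) u := by
        simpa using (hasDerivAt_id u).mul_const (deriv f 0)
      exact ((h1.sub_const (f 0)).sub h2).hasDerivWithinAt
    have bound : ∀ u ∈ uIcc (0:ℝ) y, ‖deriv f u - deriv f 0‖ ≤ C * |y| := by
      intro u hu
      have huIcc : u ∈ Icc (-1:ℝ) 1 :=
        (Set.ordConnected_Icc.uIcc_subset h0 hyIcc) hu
      have hule : |u| ≤ |y| := by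
        rcases le_total 0 y with h | h
        · rw [uIcc_of_le (by linarith)] at hu
          rw [abs_of_nonneg hu.1, abs_of_nonneg h]; exact hu.2
        · rw [uIcc_of_ge (by linarith)] at hu
          rw [abs_of_nonpos (hu.2), abs_of_nonpos h]; linarith [hu.1]
      calc ‖deriv f u - deriv f 0‖ = |deriv f u - deriv f 0| := rfl
        _ ≤ C * |u| := lipdf u huIcc
        _ ≤ C * |y| := by nlinarith
    have := Convex.norm_image_sub_le_of_norm_hasDerivWithin_le key bound
      (convex_uIcc _ _) (left_mem_uIcc) (right_mem_uIcc)
    have h2 : ‖(f y - f 0 - y * deriv f 0) - (f 0 - f 0 - 0 * deriv f 0)‖ ≤ C * |y| * ‖y - 0‖ := by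
      simpa using this
    calc |f y - f 0 - y * deriv f 0| ≤ C * |y| * |y| := by simpa using h2
      _ = C * y ^ 2 := by rw [sq, mul_assoc, abs_mul_abs_self]
  · have := Convex.norm_image_sub_le_of_norm_hasDerivWithin_le
      (f := f) (f' := deriv f) (s := Icc (-1:ℝ) 1) (C := C)
      (fun u hu => ((hf.differentiable (by simp)).differentiableAt.hasDerivAt).hasDerivWithinAt)
      (fun u hu => le_trans (hM1 u hu) (by simp [hC]; linarith [le_max_left M1 M2]))
      (convex_Icc _ _) hyIcc h0
    simpa [abs_sub_comm] using this

/-- The two directional derivatives of the Fermi parametrization. -/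
lemma fermi_fderiv' {N : ℕ} (γ : ℝ → EuclideanSpace ℝ (Fin N))
    (E : Fin (N - 1) → ℝ → EuclideanSpace ℝ (Fin N))
    (hγ : ContDiff ℝ (⊤ : ℕ∞) γ) (hE : ∀ i, ContDiff ℝ (⊤ : ℕ∞) (E i)) (x : Pt N) :
    fderiv ℝ (Fermi γ E) x (1, 0) = deriv γ x.1 + ∑ i, x.2 i • deriv (E i) x.1 ∧
    ∀ j, fderiv ℝ (Fermi γ E) x (0, EuclideanSpace.single j 1) = E j x.1 := by
  have hdγ : HasDerivAt γ (deriv γ x.1) x.1 :=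
    (hγ.differentiable (by simp)).differentiableAt.hasDerivAt
  have h1 : HasFDerivAt (fun p : Pt N => γ p.1)
      ((ContinuousLinearMap.smulRight (1 : ℝ →L[ℝ] ℝ) (deriv γ x.1)).comp
        (ContinuousLinearMap.fst ℝ ℝ _)) x :=
    HasFDerivAt.comp x hdγ.hasFDerivAt hasFDerivAt_fst
  have hsmul : ∀ i : Fin (N-1), HasFDerivAt (fun p : Pt N => p.2 i • E i p.1)
      (x.2 i • ((ContinuousLinearMap.smulRight (1 : ℝ →L[ℝ] ℝ) (deriv (E i) x.1)).comp
        (ContinuousLinearMap.fst ℝ ℝ _)) +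
       ((EuclideanSpace.proj i).comp
         (ContinuousLinearMap.snd ℝ ℝ _)).smulRight (E i x.1)) x := by
    intro i
    have hdE : HasDerivAt (E i) (deriv (E i) x.1) x.1 :=
      ((hE i).differentiable (by simp)).differentiableAt.hasDerivAt
    have hf : HasFDerivAt (fun p : Pt N => E i p.1)
        ((ContinuousLinearMap.smulRight (1 : ℝ →L[ℝ] ℝ) (deriv (E i) x.1)).comp
          (ContinuousLinearMap.fst ℝ ℝ _)) x :=
      HasFDerivAt.comp x hdE.hasFDerivAt hasFDerivAt_fst
    have hc : HasFDerivAt (fun p : Pt N => p.2 i)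
        ((EuclideanSpace.proj i).comp (ContinuousLinearMap.snd ℝ ℝ _)) x :=
      ((EuclideanSpace.proj (𝕜 := ℝ) i).comp
        (ContinuousLinearMap.snd ℝ ℝ _)).hasFDerivAt
    exact hc.smul hf
  have hF : HasFDerivAt (Fermi γ E)
      (((ContinuousLinearMap.smulRight (1 : ℝ →L[ℝ] ℝ) (deriv γ x.1)).comp
        (ContinuousLinearMap.fst ℝ ℝ _)) +
       ∑ i, (x.2 i • ((ContinuousLinearMap.smulRight (1 : ℝ →L[ℝ] ℝ) (deriv (E i) x.1)).comp
        (ContinuousLinearMap.fst ℝ ℝ _)) +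
       ((EuclideanSpace.proj i).comp
         (ContinuousLinearMap.snd ℝ ℝ _)).smulRight (E i x.1))) x :=
    h1.add (HasFDerivAt.fun_sum (fun i (_ : i ∈ Finset.univ) => hsmul i))
  rw [hF.fderiv]
  constructor
  · simp
  · intro j
    simp [EuclideanSpace.single_apply, Finset.sum_ite_eq]

set_option maxHeartbeats 2000000 in
/-- expansion of the metric components `g₁₁`, `g₁ᵢ`, `gᵢⱼ` in the
Fermi chart. -/
theorem stmt_7 (N : ℕ) (hN : 2 ≤ N) (Γ : Set (EuclideanSpace ℝ (Fin N))) (hΓ : IsSmoothClosedCurve Γ)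
    (y0 : EuclideanSpace ℝ (Fin N)) (hy0 : y0 ∈ Γ)
    (γ : ℝ → EuclideanSpace ℝ (Fin N)) (E : Fin (N - 1) → ℝ → EuclideanSpace ℝ (Fin N))
    (hγ : ContDiff ℝ (⊤ : ℕ∞) γ) (hγ0 : γ 0 = y0) (hγΓ : ∀ t, γ t ∈ Γ)
    (hunit : ∀ t, ‖deriv γ t‖ = 1)
    (hE : ∀ i, ContDiff ℝ (⊤ : ℕ∞) (E i))
    (hortho : ∀ t i j, ⟪E i t, E j t⟫ = if i = j then (1 : ℝ) else 0)
    (hnormal : ∀ t i, ⟪deriv γ t, E i t⟫ = (0 : ℝ))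
    (κ : Fin (N - 1) → ℝ → ℝ) (τ : Fin (N - 1) → Fin (N - 1) → ℝ → ℝ)
    (hfr : ∀ i t, deriv (E i) t = κ i t • deriv γ t + ∑ j, τ i j t • E j t) :
    ∃ r > 0, ∃ C > 0, ∀ x ∈ Qset N r,
      |gcomp (Fermi γ E) (1, 0) (1, 0) x -
        (1 + 2 * ∑ i, x.2 i * κ i 0 + 2 * x.1 * ∑ i, x.2 i * deriv (κ i) 0
          + (∑ i, ∑ j, x.2 i * x.2 j * (κ i 0 * κ j 0))
          + ∑ i, ∑ j, x.2 i * x.2 j * (∑ m, τ i m 0 * τ j m 0))| ≤ C * pnorm x ^ 3 ∧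
      (∀ i, |gcomp (Fermi γ E) (1, 0) (0, EuclideanSpace.single i 1) x -
        ((∑ j, x.2 j * τ j i 0) + x.1 * ∑ j, x.2 j * deriv (τ j i) 0)| ≤ C * pnorm x ^ 3) ∧
      (∀ i j, gcomp (Fermi γ E) (0, EuclideanSpace.single i 1)
          (0, EuclideanSpace.single j 1) x = if i = j then 1 else 0) := by
  classical
  have hd := fermi_fderiv' γ E hγ hE
  -- basic inner-product identities
  have hγγ : ∀ t, ⟪deriv γ t, deriv γ t⟫ = (1 : ℝ) := by
    intro t
    rw [real_inner_self_eq_norm_sq, hunit t]; norm_num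
  have hEg : ∀ i t, ⟪E i t, deriv γ t⟫ = (0 : ℝ) := by
    intro i t; rw [real_inner_comm]; exact hnormal t i
  have hκi : ∀ i t, ⟪deriv (E i) t, deriv γ t⟫ = κ i t := by
    intro i t
    rw [hfr i t]
    simp only [inner_add_left, sum_inner, real_inner_smul_left, hγγ, hEg,
      mul_one, mul_zero, Finset.sum_const_zero, add_zero]
  have hκi' : ∀ i t, ⟪deriv γ t, deriv (E i) t⟫ = κ i t := by
    intro i t; rw [real_inner_comm]; exact hκi i t
  have hτi : ∀ i m t, ⟪deriv (E i) t, E m t⟫ = τ i m t := by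
    intro i m t
    rw [hfr i t]
    simp only [inner_add_left, sum_inner, real_inner_smul_left, hnormal, hortho,
      mul_ite, mul_one, mul_zero, Finset.sum_ite_eq, Finset.sum_ite_eq',
      Finset.mem_univ, if_true, Finset.sum_const_zero, add_zero, zero_add]
  have hEE : ∀ i j t, ⟪deriv (E i) t, deriv (E j) t⟫
      = κ i t * κ j t + ∑ m, τ i m t * τ j m t := by
    intro i j t
    rw [hfr i t, hfr j t]
    simp only [inner_add_left, inner_add_right, sum_inner, inner_sum,
      real_inner_smul_left, real_inner_smul_right, hγγ, hnormal, hEg, hortho,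
      mul_ite, mul_one, mul_zero, Finset.sum_ite_eq, Finset.sum_ite_eq',
      Finset.mem_univ, if_true, Finset.sum_const_zero, add_zero, zero_add]
    have hc : ∑ m : Fin (N-1), τ j m t * τ i m t = ∑ m : Fin (N-1), τ i m t * τ j m t :=
      Finset.sum_congr rfl fun m _ => mul_comm _ _
    rw [hc, mul_comm (κ j t) (κ i t)]
  -- smoothness of κ and τ
  have hκfun : ∀ i, κ i = fun t => ⟪deriv (E i) t, deriv γ t⟫ :=
    fun i => funext fun t => (hκi i t).symm
  have hτfun : ∀ i m, τ i m = fun t => ⟪deriv (E i) t, E m t⟫ :=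
    fun i m => funext fun t => (hτi i m t).symm
  have hγinf : ContDiff ℝ ((⊤ : ENat) : WithTop ENat) γ := hγ.of_le (by simp)
  have hEinf : ∀ i, ContDiff ℝ ((⊤ : ENat) : WithTop ENat) (E i) := fun i => (hE i).of_le (by simp)
  have hdγ : ContDiff ℝ ((⊤ : ENat) : WithTop ENat) (deriv γ) :=
    (contDiff_infty_iff_deriv.mp hγinf).2
  have hdE : ∀ i, ContDiff ℝ ((⊤ : ENat) : WithTop ENat) (deriv (E i)) :=
    fun i => (contDiff_infty_iff_deriv.mp (hEinf i)).2
  have hκsm : ∀ i, ContDiff ℝ ((⊤ : ENat) : WithTop ENat) (κ i) := by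
    intro i; rw [hκfun i]; exact (hdE i).inner ℝ hdγ
  have hτsm : ∀ i m, ContDiff ℝ ((⊤ : ENat) : WithTop ENat) (τ i m) := by
    intro i m; rw [hτfun i m]; exact (hdE i).inner ℝ (hEinf m)
  set P : Fin (N - 1) → Fin (N - 1) → ℝ → ℝ :=
    fun i j t => κ i t * κ j t + ∑ m, τ i m t * τ j m t with hPdef
  have hPsm : ∀ i j, ContDiff ℝ ((⊤ : ENat) : WithTop ENat) (P i j) := by
    intro i j
    exact ((hκsm i).mul (hκsm j)).add (ContDiff.sum fun m _ => (hτsm i m).mul (hτsm j m))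
  -- Taylor constants
  choose Cκ hCκpos hCκ using fun i => taylor_aux' (κ i) (hκsm i)
  choose Cτ hCτpos hCτ using fun i m => taylor_aux' (τ i m) (hτsm i m)
  choose CP hCPpos hCP using fun i j => taylor_aux' (P i j) (hPsm i j)
  have hCκnn : (0 : ℝ) ≤ ∑ i, Cκ i := Finset.sum_nonneg fun i _ => (hCκpos i).le
  have hCτnn : (0 : ℝ) ≤ ∑ i, ∑ j, Cτ i j :=
    Finset.sum_nonneg fun i _ => Finset.sum_nonneg fun j _ => (hCτpos i j).le
  have hCPnn : (0 : ℝ) ≤ ∑ i, ∑ j, CP i j :=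
    Finset.sum_nonneg fun i _ => Finset.sum_nonneg fun j _ => (hCPpos i j).le
  refine ⟨1, one_pos,
    2 * (∑ i, Cκ i) + (∑ i, ∑ j, CP i j) + (∑ i, ∑ j, Cτ i j) + 1, by linarith, ?_⟩
  intro x hx
  obtain ⟨hxy, hxz⟩ := hx
  set p := pnorm x with hpdef
  have hp0 : (0 : ℝ) ≤ p := Real.sqrt_nonneg _
  have hp3 : (0 : ℝ) ≤ p ^ 3 := by positivity
  have hyp : |x.1| ≤ p := by
    rw [hpdef]; unfold pnorm
    rw [← Real.sqrt_sq_eq_abs]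
    exact Real.sqrt_le_sqrt (le_add_of_nonneg_right (by positivity))
  have hzn : ‖x.2‖ ≤ p := by
    rw [hpdef]; unfold pnorm
    calc ‖x.2‖ = Real.sqrt (‖x.2‖ ^ 2) := (Real.sqrt_sq (norm_nonneg _)).symm
      _ ≤ Real.sqrt (x.1 ^ 2 + ‖x.2‖ ^ 2) :=
        Real.sqrt_le_sqrt (le_add_of_nonneg_left (sq_nonneg _))
  have hzp : ∀ i, |x.2 i| ≤ p := by
    intro i
    have h1 : |x.2 i| ≤ ‖x.2‖ := by
      have h2 := abs_real_inner_le_norm (EuclideanSpace.single i (1 : ℝ)) x.2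
      simpa [EuclideanSpace.inner_single_left, EuclideanSpace.norm_single] using h2
    exact h1.trans hzn
  have hy1 : |x.1| ≤ 1 := by
    rw [abs_le]; exact ⟨hxy.1.le, hxy.2.le⟩
  have hysq : x.1 ^ 2 ≤ p ^ 2 := by nlinarith [abs_nonneg x.1, sq_abs x.1]
  -- the metric components
  have hg11 : gcomp (Fermi γ E) (1, 0) (1, 0) x
      = 1 + 2 * ∑ i, x.2 i * κ i x.1 + ∑ i, ∑ j, x.2 i * x.2 j * P i j x.1 := by
    unfold gcomp
    rw [(hd x).1]
    simp only [hPdef]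
    have hAB : ⟪deriv γ x.1, ∑ i, x.2 i • deriv (E i) x.1⟫ = ∑ i, x.2 i * κ i x.1 := by
      rw [inner_sum]
      exact Finset.sum_congr rfl fun i _ => by rw [real_inner_smul_right, hκi']
    have hBA : ⟪∑ i, x.2 i • deriv (E i) x.1, deriv γ x.1⟫ = ∑ i, x.2 i * κ i x.1 := by
      rw [sum_inner]
      exact Finset.sum_congr rfl fun i _ => by rw [real_inner_smul_left, hκi]
    have hBB : ⟪∑ i, x.2 i • deriv (E i) x.1, ∑ j, x.2 j • deriv (E j) x.1⟫
        = ∑ i, ∑ j, x.2 i * x.2 j * (κ i x.1 * κ j x.1 + ∑ m, τ i m x.1 * τ j m x.1) := by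
      rw [sum_inner]
      refine Finset.sum_congr rfl fun i _ => ?_
      rw [real_inner_smul_left, inner_sum, Finset.mul_sum]
      refine Finset.sum_congr rfl fun j _ => ?_
      rw [real_inner_smul_right, hEE i j]
      ring
    simp only [inner_add_left, inner_add_right]
    rw [hγγ, hAB, hBA, hBB]
    ring
  have hg1i : ∀ i, gcomp (Fermi γ E) (1, 0) (0, EuclideanSpace.single i 1) x
      = ∑ j, x.2 j * τ j i x.1 := by
    intro i
    unfold gcomp
    rw [(hd x).1, (hd x).2 i]
    simp only [inner_add_left, sum_inner, real_inner_smul_left, hnormal, hτi,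
      zero_add]
  have hgij : ∀ i j, gcomp (Fermi γ E) (0, EuclideanSpace.single i 1)
      (0, EuclideanSpace.single j 1) x = if i = j then (1 : ℝ) else 0 := by
    intro i j
    unfold gcomp
    rw [(hd x).2 i, (hd x).2 j]
    exact hortho x.1 i j
  refine ⟨?_, ?_, hgij⟩
  · -- g₁₁ estimate
    rw [hg11]
    have hsum2 : (∑ i, ∑ j, x.2 i * x.2 j * (κ i 0 * κ j 0))
        + ∑ i, ∑ j, x.2 i * x.2 j * (∑ m, τ i m 0 * τ j m 0)
        = ∑ i, ∑ j, x.2 i * x.2 j * P i j 0 := by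
      rw [← Finset.sum_add_distrib]
      refine Finset.sum_congr rfl fun i _ => ?_
      rw [← Finset.sum_add_distrib]
      exact Finset.sum_congr rfl fun j _ => by simp only [hPdef]; ring
    have swap1 : ∑ i, x.2 i * (x.1 * deriv (κ i) 0) = x.1 * ∑ i, x.2 i * deriv (κ i) 0 := by
      rw [Finset.mul_sum]; exact Finset.sum_congr rfl fun i _ => by ring
    have heq : (1 + 2 * ∑ i, x.2 i * κ i x.1 + ∑ i, ∑ j, x.2 i * x.2 j * P i j x.1)
        - (1 + 2 * ∑ i, x.2 i * κ i 0 + 2 * x.1 * ∑ i, x.2 i * deriv (κ i) 0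
          + (∑ i, ∑ j, x.2 i * x.2 j * (κ i 0 * κ j 0))
          + ∑ i, ∑ j, x.2 i * x.2 j * (∑ m, τ i m 0 * τ j m 0))
        = 2 * (∑ i, x.2 i * (κ i x.1 - κ i 0 - x.1 * deriv (κ i) 0))
          + ∑ i, ∑ j, x.2 i * x.2 j * (P i j x.1 - P i j 0) := by
      simp only [hPdef, mul_sub, mul_add, Finset.sum_sub_distrib, Finset.sum_add_distrib]
      rw [swap1]
      ring
    rw [heq]
    have hD1 : |∑ i, x.2 i * (κ i x.1 - κ i 0 - x.1 * deriv (κ i) 0)|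
        ≤ (∑ i, Cκ i) * p ^ 3 := by
      calc |∑ i, x.2 i * (κ i x.1 - κ i 0 - x.1 * deriv (κ i) 0)|
          ≤ ∑ i, |x.2 i * (κ i x.1 - κ i 0 - x.1 * deriv (κ i) 0)| :=
            Finset.abs_sum_le_sum_abs _ _
        _ ≤ ∑ i, Cκ i * p ^ 3 := by
            refine Finset.sum_le_sum fun i _ => ?_
            rw [abs_mul]
            have h1 := (hCκ i x.1 hy1).1
            have h2 := mul_le_mul (hzp i) h1 (abs_nonneg _) hp0
            nlinarith [(hCκpos i).le, hp0, hysq, abs_nonneg (x.2 i),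
              mul_le_mul_of_nonneg_left hysq (mul_nonneg hp0 (hCκpos i).le)]
        _ = (∑ i, Cκ i) * p ^ 3 := (Finset.sum_mul _ _ _).symm
    have hD2 : |∑ i, ∑ j, x.2 i * x.2 j * (P i j x.1 - P i j 0)|
        ≤ (∑ i, ∑ j, CP i j) * p ^ 3 := by
      calc |∑ i, ∑ j, x.2 i * x.2 j * (P i j x.1 - P i j 0)|
          ≤ ∑ i, |∑ j, x.2 i * x.2 j * (P i j x.1 - P i j 0)| :=
            Finset.abs_sum_le_sum_abs _ _
        _ ≤ ∑ i, ∑ j, |x.2 i * x.2 j * (P i j x.1 - P i j 0)| :=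
            Finset.sum_le_sum fun i _ => Finset.abs_sum_le_sum_abs _ _
        _ ≤ ∑ i, ∑ j, CP i j * p ^ 3 := by
            refine Finset.sum_le_sum fun i _ => Finset.sum_le_sum fun j _ => ?_
            rw [abs_mul, abs_mul]
            have h1 := (hCP i j x.1 hy1).2
            have h2 := mul_le_mul (hzp i) (hzp j) (abs_nonneg _) hp0
            have h3 := mul_le_mul h2 h1 (abs_nonneg _) (by positivity)
            nlinarith [(hCPpos i j).le, hp0, hyp, abs_nonneg x.1,
              mul_le_mul_of_nonneg_left hyp
                (mul_nonneg (mul_nonneg hp0 hp0) (hCPpos i j).le)]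
        _ = (∑ i, ∑ j, CP i j) * p ^ 3 := by
            rw [Finset.sum_mul]
            exact Finset.sum_congr rfl fun i _ => (Finset.sum_mul _ _ _).symm
    calc |2 * (∑ i, x.2 i * (κ i x.1 - κ i 0 - x.1 * deriv (κ i) 0))
          + ∑ i, ∑ j, x.2 i * x.2 j * (P i j x.1 - P i j 0)|
        ≤ 2 * |∑ i, x.2 i * (κ i x.1 - κ i 0 - x.1 * deriv (κ i) 0)|
          + |∑ i, ∑ j, x.2 i * x.2 j * (P i j x.1 - P i j 0)| := by
          have := abs_add_le (2 * (∑ i, x.2 i * (κ i x.1 - κ i 0 - x.1 * deriv (κ i) 0)))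
            (∑ i, ∑ j, x.2 i * x.2 j * (P i j x.1 - P i j 0))
          rw [abs_mul] at this
          simpa using this
      _ ≤ (2 * (∑ i, Cκ i) + (∑ i, ∑ j, CP i j) + (∑ i, ∑ j, Cτ i j) + 1) * p ^ 3 := by
          nlinarith [hD1, hD2, hp3, hCτnn, mul_nonneg hCτnn hp3]
  · -- g₁ᵢ estimate
    intro i
    rw [hg1i i]
    have swap2 : ∑ j, x.2 j * (x.1 * deriv (τ j i) 0) = x.1 * ∑ j, x.2 j * deriv (τ j i) 0 := by
      rw [Finset.mul_sum]; exact Finset.sum_congr rfl fun j _ => by ring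
    have heq : (∑ j, x.2 j * τ j i x.1)
        - ((∑ j, x.2 j * τ j i 0) + x.1 * ∑ j, x.2 j * deriv (τ j i) 0)
        = ∑ j, x.2 j * (τ j i x.1 - τ j i 0 - x.1 * deriv (τ j i) 0) := by
      simp only [mul_sub, Finset.sum_sub_distrib]
      rw [swap2]
      ring
    rw [heq]
    have hD : |∑ j, x.2 j * (τ j i x.1 - τ j i 0 - x.1 * deriv (τ j i) 0)|
        ≤ (∑ j, ∑ m, Cτ j m) * p ^ 3 := by
      calc |∑ j, x.2 j * (τ j i x.1 - τ j i 0 - x.1 * deriv (τ j i) 0)|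
          ≤ ∑ j, |x.2 j * (τ j i x.1 - τ j i 0 - x.1 * deriv (τ j i) 0)| :=
            Finset.abs_sum_le_sum_abs _ _
        _ ≤ ∑ j, Cτ j i * p ^ 3 := by
            refine Finset.sum_le_sum fun j _ => ?_
            rw [abs_mul]
            have h1 := (hCτ j i x.1 hy1).1
            have h2 := mul_le_mul (hzp j) h1 (abs_nonneg _) hp0
            nlinarith [(hCτpos j i).le, hp0, hysq, abs_nonneg (x.2 j),
              mul_le_mul_of_nonneg_left hysq (mul_nonneg hp0 (hCτpos j i).le)]
        _ ≤ ∑ j, (∑ m, Cτ j m) * p ^ 3 := by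
            refine Finset.sum_le_sum fun j _ => ?_
            have : Cτ j i ≤ ∑ m, Cτ j m :=
              Finset.single_le_sum (f := fun m => Cτ j m)
                (fun m _ => (hCτpos j m).le) (Finset.mem_univ i)
            exact mul_le_mul_of_nonneg_right this hp3
        _ = (∑ j, ∑ m, Cτ j m) * p ^ 3 := (Finset.sum_mul _ _ _).symm
    calc |∑ j, x.2 j * (τ j i x.1 - τ j i 0 - x.1 * deriv (τ j i) 0)|
        ≤ (∑ j, ∑ m, Cτ j m) * p ^ 3 := hD
      _ ≤ (2 * (∑ i, Cκ i) + (∑ i, ∑ j, CP i j) + (∑ i, ∑ j, Cτ i j) + 1) * p ^ 3 := by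
          nlinarith [hCκnn, hCPnn, hp3, mul_nonneg hCκnn hp3, mul_nonneg hCPnn hp3]

end
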